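/- The map σ from the complete lattice Cll(X) of local clones on a countably infinite set X into the lattice of partial clones of finite operations on X, which sends each local clone C to the set of all restrictions of operations of C to finite subsets of the appropriate powers of X, is injective and preserves arbitrary (including infinite) joins. -/

import Mathlib

/-- A finitary operation on `X`: an `(n+1)`-ary function `X^(n+1) → X` (arities are ≥ 1). -/
abbrev FinOp (X : Type) := Σ n : ℕ, (Fin (n + 1) → X) → X

/-- A finitary relation on `X`: an `(m+1)`-ary relation `ρ ⊆ X^(m+1)` (arities are ≥ 1). -/
abbrev FinRel (X : Type) := Σ m : ℕ, Set (Fin (m + 1) → X)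

variable {X : Type}

/-- `C` is a clone: it contains all projections and is closed under composition. -/
def IsClone (C : Set (FinOp X)) : Prop :=
  (∀ (n : ℕ) (k : Fin (n + 1)), (⟨n, fun x => x k⟩ : FinOp X) ∈ C) ∧
  (∀ (n m : ℕ) (f : (Fin (n + 1) → X) → X) (g : Fin (n + 1) → (Fin (m + 1) → X) → X),
    (⟨n, f⟩ : FinOp X) ∈ C → (∀ i, (⟨m, g i⟩ : FinOp X) ∈ C) →
    (⟨m, fun x => f fun i => g i x⟩ : FinOp X) ∈ C)

/-- `C` is a local clone: a clone each of whose `n`-ary fragments is closed in the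
product topology on `X^(X^n)`, where `X` carries the discrete topology. -/
def IsLocalClone (C : Set (FinOp X)) : Prop :=
  IsClone C ∧
  ∀ n : ℕ,
    letI : TopologicalSpace X := ⊥
    IsClosed {f : (Fin (n + 1) → X) → X | (⟨n, f⟩ : FinOp X) ∈ C}

/-- The smallest local clone containing `F` (the local clone generated by `F`). -/
def cllClosure (F : Set (FinOp X)) : Set (FinOp X) :=
  ⋂₀ {C : Set (FinOp X) | IsLocalClone C ∧ F ⊆ C}

/-- `f` preserves the relation `ρ`. -/
def Preserves {n m : ℕ} (f : (Fin (n + 1) → X) → X) (ρ : Set (Fin (m + 1) → X)) : Prop :=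
  ∀ r : Fin (n + 1) → Fin (m + 1) → X, (∀ i, r i ∈ ρ) → (fun j => f fun i => r i j) ∈ ρ

/-- `Pol R`: all finitary operations preserving every relation in `R`. -/
def Polymorphisms (R : Set (FinRel X)) : Set (FinOp X) :=
  {f | ∀ ρ ∈ R, Preserves f.2 ρ.2}

/-- `Inv F`: all finitary relations invariant under every operation in `F`. -/
def Invariants (F : Set (FinOp X)) : Set (FinRel X) :=
  {ρ | ∀ f ∈ F, Preserves f.2 ρ.2}

/-- The clone of projections. -/
def projClone (X : Type) : Set (FinOp X) :=
  {f | ∃ k : Fin (f.1 + 1), f.2 = fun x => x k}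

/-- A partial finitary operation on `X`: a partial function `X^(n+1) →. X`. -/
abbrev PartFinOp (X : Type) := Σ n : ℕ, (Fin (n + 1) → X) →. X

/-- Combine a tuple of partial values into a partial tuple. -/
def partPi {X : Type} {k : ℕ} (p : Fin k → Part X) : Part (Fin k → X) :=
  ⟨∀ i, (p i).Dom, fun h i => (p i).get (h i)⟩

/-- A partial clone of finite operations: a set of partial operations with finite domain,
containing all restrictions of projections to finite domains, closed under composition. -/
def IsPartialClone {X : Type} (P : Set (PartFinOp X)) : Prop :=
  (∀ p ∈ P, {x | (Sigma.snd p x).Dom}.Finite) ∧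
  (∀ (n : ℕ) (k : Fin (n + 1)) (D : Set (Fin (n + 1) → X)), D.Finite →
    (⟨n, fun x => ⟨x ∈ D, fun _ => x k⟩⟩ : PartFinOp X) ∈ P) ∧
  (∀ (n m : ℕ) (f : (Fin (n + 1) → X) →. X) (g : Fin (n + 1) → (Fin (m + 1) → X) →. X),
    (⟨n, f⟩ : PartFinOp X) ∈ P → (∀ i, (⟨m, g i⟩ : PartFinOp X) ∈ P) →
    (⟨m, fun x => (partPi fun i => g i x).bind f⟩ : PartFinOp X) ∈ P)

/-- The partial clone of finite operations generated by `F`. -/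
def partialCloneClosure {X : Type} (F : Set (PartFinOp X)) : Set (PartFinOp X) :=
  ⋂₀ {P : Set (PartFinOp X) | IsPartialClone P ∧ F ⊆ P}

/-- The restriction of a total operation to a domain `D`. -/
def restrictOp {X : Type} {n : ℕ} (f : (Fin (n + 1) → X) → X)
    (D : Set (Fin (n + 1) → X)) : (Fin (n + 1) → X) →. X :=
  fun x => ⟨x ∈ D, fun _ => f x⟩

/-- The set of all restrictions of operations of `C` to finite domains. -/
def partRestrictions {X : Type} (C : Set (FinOp X)) : Set (PartFinOp X) :=
  {p | ∃ f : (Fin (p.1 + 1) → X) → X, (⟨p.1, f⟩ : FinOp X) ∈ C ∧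
    ∃ D : Set (Fin (p.1 + 1) → X), D.Finite ∧ p.2 = restrictOp f D}

/-! A local clone is determined by its finite restrictions: an operation all of whose finite
restrictions are restrictions of members of a local clone `C` lies in the closure of `C`,
hence in `C`. For joins, `partRestrictions` is the left adjoint of `totalOps`, which sends a
partial clone to a local clone; so the finite restrictions of the local clone generated by
`⋃ 𝒮` all lie in every partial clone containing the finite restrictions of each `C ∈ 𝒮`. -/

section Restriction

variable {n m : ℕ}

lemma restrictOp_congr {f g : (Fin (n + 1) → X) → X} {D : Set (Fin (n + 1) → X)}
    (h : Set.EqOn f g D) : restrictOp f D = restrictOp g D :=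
  funext fun _ => Part.ext' Iff.rfl fun hx _ => h hx

lemma eqOn_of_restrictOp_eq {f g : (Fin (n + 1) → X) → X} {D D' : Set (Fin (n + 1) → X)}
    (h : restrictOp f D = restrictOp g D') : Set.EqOn f g D := by
  intro x hx
  have hfx : f x ∈ restrictOp f D x := ⟨hx, rfl⟩
  rw [h] at hfx
  exact hfx.2.symm

lemma partPi_bind_restrictOp (f : (Fin (n + 1) → X) → X)
    (g : Fin (n + 1) → (Fin (m + 1) → X) → X) (Df : Set (Fin (n + 1) → X))
    (Dg : Fin (n + 1) → Set (Fin (m + 1) → X)) :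
    (fun x => (partPi fun i => restrictOp (g i) (Dg i) x).bind (restrictOp f Df)) =
      restrictOp (fun x => f fun i => g i x) {x | (∀ i, x ∈ Dg i) ∧ (fun i => g i x) ∈ Df} :=
  funext fun _ => Part.ext' ⟨fun ⟨h₁, h₂⟩ => ⟨h₁, h₂⟩, fun ⟨h₁, h₂⟩ => ⟨h₁, h₂⟩⟩ fun _ _ => rfl

end Restriction

section PointwiseTopology

variable {α Y : Type*} [TopologicalSpace Y]

lemma isClosed_of_forall_eqOn [DiscreteTopology Y] {D : Set α} (hD : D.Finite)
    {T : Set (α → Y)} (hT : ∀ f ∈ T, ∀ g, Set.EqOn g f D → g ∈ T) : IsClosed T := by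
  rw [← isOpen_compl_iff]
  have hTc : Tᶜ = ⋃ f ∈ Tᶜ, Set.pi D fun x => {f x} := by
    ext g
    simp only [Set.mem_iUnion, Set.mem_pi, Set.mem_singleton_iff]
    refine ⟨fun hg => ⟨g, hg, fun _ _ => rfl⟩, fun ⟨f, hf, hgf⟩ hg => hf ?_⟩
    exact hT g hg f fun x hx => (hgf x hx).symm
  rw [hTc]
  exact isOpen_biUnion fun f _ => isOpen_set_pi hD fun _ _ => isOpen_discrete _

lemma mem_of_isClosed_of_forall_finite {S : Set (α → Y)} (hS : IsClosed S) {f : α → Y}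
    (h : ∀ D : Set α, D.Finite → ∃ g ∈ S, Set.EqOn g f D) : f ∈ S := by
  rw [← hS.closure_eq, mem_closure_iff]
  intro o ho hfo
  obtain ⟨I, u, hu, hIu⟩ := isOpen_pi_iff.1 ho f hfo
  obtain ⟨g, hgS, hgf⟩ := h I I.finite_toSet
  exact ⟨g, hIu fun x hx => hgf hx ▸ (hu x hx).2, hgS⟩

end PointwiseTopology

section Closures

lemma isLocalClone_cllClosure (F : Set (FinOp X)) : IsLocalClone (cllClosure F) := by
  refine ⟨⟨fun n k => Set.mem_sInter.2 fun C hC => hC.1.1.1 n k, ?_⟩, fun n => ?_⟩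
  · intro n m f g hf hg
    exact Set.mem_sInter.2 fun C hC =>
      hC.1.1.2 n m f g (Set.mem_sInter.1 hf C hC) fun i => Set.mem_sInter.1 (hg i) C hC
  · let _ : TopologicalSpace X := ⊥
    have hfrag : {f : (Fin (n + 1) → X) → X | (⟨n, f⟩ : FinOp X) ∈ cllClosure F} =
        ⋂ C ∈ {C : Set (FinOp X) | IsLocalClone C ∧ F ⊆ C},
          {f : (Fin (n + 1) → X) → X | (⟨n, f⟩ : FinOp X) ∈ C} := by
      ext f
      simp [cllClosure]
    rw [hfrag]
    exact isClosed_biInter fun C hC => hC.1.2 n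

lemma subset_cllClosure (F : Set (FinOp X)) : F ⊆ cllClosure F :=
  Set.subset_sInter fun _ hC => hC.2

lemma cllClosure_subset {F C : Set (FinOp X)} (hC : IsLocalClone C) (hFC : F ⊆ C) :
    cllClosure F ⊆ C :=
  Set.sInter_subset_of_mem ⟨hC, hFC⟩

lemma isPartialClone_setOf_finite_dom :
    IsPartialClone {p : PartFinOp X | {x | (p.2 x).Dom}.Finite} :=
  ⟨fun _ hp => hp, fun _ _ _ hD => hD,
    fun _ _ _ _ _ hg => (hg 0).subset fun _ hx => hx.1 0⟩

lemma isPartialClone_partialCloneClosure {F : Set (PartFinOp X)}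
    (hF : ∀ p ∈ F, {x | (p.2 x).Dom}.Finite) : IsPartialClone (partialCloneClosure F) := by
  refine ⟨fun p hp => Set.mem_sInter.1 hp _ ⟨isPartialClone_setOf_finite_dom, hF⟩,
    fun n k D hD => Set.mem_sInter.2 fun P hP => hP.1.2.1 n k D hD, ?_⟩
  intro n m f g hf hg
  exact Set.mem_sInter.2 fun P hP =>
    hP.1.2.2 n m f g (Set.mem_sInter.1 hf P hP) fun i => Set.mem_sInter.1 (hg i) P hP

lemma subset_partialCloneClosure (F : Set (PartFinOp X)) : F ⊆ partialCloneClosure F :=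
  Set.subset_sInter fun _ hP => hP.2

lemma partialCloneClosure_subset {F P : Set (PartFinOp X)} (hP : IsPartialClone P)
    (hFP : F ⊆ P) : partialCloneClosure F ⊆ P :=
  Set.sInter_subset_of_mem ⟨hP, hFP⟩

end Closures

section Adjunction

def totalOps (Q : Set (PartFinOp X)) : Set (FinOp X) :=
  {f | ∀ D : Set (Fin (f.1 + 1) → X), D.Finite → (⟨f.1, restrictOp f.2 D⟩ : PartFinOp X) ∈ Q}

lemma gc_partRestrictions_totalOps :
    GaloisConnection (partRestrictions (X := X)) totalOps := by
  intro C Q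
  refine ⟨fun hCQ f hf D hD => hCQ ⟨f.2, hf, D, hD, rfl⟩, ?_⟩
  rintro hCQ p ⟨f, hf, D, hD, hpD⟩
  have hfD := hCQ hf D hD
  rwa [← hpD] at hfD

lemma mem_partRestrictions_mk {C : Set (FinOp X)} {n : ℕ} {p : (Fin (n + 1) → X) →. X} :
    (⟨n, p⟩ : PartFinOp X) ∈ partRestrictions C ↔
      ∃ f, (⟨n, f⟩ : FinOp X) ∈ C ∧ ∃ D : Set (Fin (n + 1) → X), D.Finite ∧ p = restrictOp f D :=
  Iff.rfl

lemma finite_dom_of_mem_partRestrictions {C : Set (FinOp X)} {p : PartFinOp X}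
    (hp : p ∈ partRestrictions C) : {x | (p.2 x).Dom}.Finite := by
  obtain ⟨f, -, D, hD, hpD⟩ := hp
  rw [hpD]
  exact hD

lemma IsClone.isPartialClone_partRestrictions {C : Set (FinOp X)} (hC : IsClone C) :
    IsPartialClone (partRestrictions C) := by
  refine ⟨fun _ => finite_dom_of_mem_partRestrictions,
    fun n k D hD => ⟨fun x => x k, hC.1 n k, D, hD, rfl⟩, ?_⟩
  intro n m _ g hf₀ hg
  obtain ⟨f, hf, Df, -, rfl⟩ := mem_partRestrictions_mk.1 hf₀
  choose g' hg' Dg hDg hgDg using fun i => mem_partRestrictions_mk.1 (hg i)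
  obtain rfl : g = fun i => restrictOp (g' i) (Dg i) := funext hgDg
  refine mem_partRestrictions_mk.2
    ⟨_, hC.2 n m f g' hf hg', _, ?_, partPi_bind_restrictOp f g' Df Dg⟩
  exact (hDg 0).subset fun _ hx => hx.1 0

lemma IsPartialClone.isLocalClone_totalOps {Q : Set (PartFinOp X)} (hQ : IsPartialClone Q) :
    IsLocalClone (totalOps Q) := by
  refine ⟨⟨hQ.2.1, ?_⟩, fun n => ?_⟩
  · intro n m f g hf hg D hD
    have hcomp := hQ.2.2 n m _ (fun i => restrictOp (g i) D)
      (hf _ (hD.image fun x i => g i x)) fun i => hg i D hD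
    -- restricting `f` to the image of `D` makes the composite defined exactly on `D`
    have hdom : {x | (∀ i : Fin (n + 1), x ∈ D) ∧
        (fun i => g i x) ∈ (fun x i => g i x) '' D} = D :=
      Set.ext fun x => ⟨fun hx => hx.1 0, fun hx => ⟨fun _ => hx, x, hx, rfl⟩⟩
    rwa [partPi_bind_restrictOp, hdom] at hcomp
  · let _ : TopologicalSpace X := ⊥
    have : DiscreteTopology X := ⟨rfl⟩
    have hfrag : {f : (Fin (n + 1) → X) → X | (⟨n, f⟩ : FinOp X) ∈ totalOps Q} =
        ⋂ (D : Set (Fin (n + 1) → X)) (_ : D.Finite),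
          {f | (⟨n, restrictOp f D⟩ : PartFinOp X) ∈ Q} := by
      ext f
      simp [totalOps]
    rw [hfrag]
    refine isClosed_iInter fun D => isClosed_iInter fun hD => isClosed_of_forall_eqOn hD ?_
    intro f hf g hgf
    rwa [Set.mem_ofPred_eq, restrictOp_congr hgf]

lemma IsLocalClone.totalOps_partRestrictions_subset {C : Set (FinOp X)} (hC : IsLocalClone C) :
    totalOps (partRestrictions C) ⊆ C := by
  rintro ⟨n, f⟩ hf
  let _ : TopologicalSpace X := ⊥
  refine mem_of_isClosed_of_forall_finite (S := {g | (⟨n, g⟩ : FinOp X) ∈ C}) (hC.2 n) ?_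
  intro D hD
  obtain ⟨g, hg, _, -, hgD⟩ := hf D hD
  exact ⟨g, hg, (eqOn_of_restrictOp_eq hgD).symm⟩

lemma IsLocalClone.subset_of_partRestrictions_subset {C C' : Set (FinOp X)}
    (hC' : IsLocalClone C') (h : partRestrictions C ⊆ partRestrictions C') : C ⊆ C' :=
  (gc_partRestrictions_totalOps.le_u h).trans hC'.totalOps_partRestrictions_subset

end Adjunction

theorem partRestrictions_injective_and_preserves_joins_general (X : Type) :
    (∀ C : Set (FinOp X), IsLocalClone C → IsPartialClone (partRestrictions C)) ∧
    Set.InjOn (partRestrictions (X := X)) {C : Set (FinOp X) | IsLocalClone C} ∧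
    (∀ 𝒮 : Set (Set (FinOp X)), (∀ C ∈ 𝒮, IsLocalClone C) →
      partRestrictions (cllClosure (⋃₀ 𝒮)) =
        partialCloneClosure (⋃ C ∈ 𝒮, partRestrictions C)) := by
  have gc := gc_partRestrictions_totalOps (X := X)
  refine ⟨fun C hC => hC.1.isPartialClone_partRestrictions,
    fun C hC C' hC' h => (hC'.subset_of_partRestrictions_subset h.le).antisymm
      (hC.subset_of_partRestrictions_subset h.ge), fun 𝒮 _ => ?_⟩
  have hQ : IsPartialClone (partialCloneClosure (⋃ C ∈ 𝒮, partRestrictions C)) :=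
    isPartialClone_partialCloneClosure fun p hp => by
      obtain ⟨C, -, hp⟩ := Set.mem_iUnion₂.1 hp
      exact finite_dom_of_mem_partRestrictions hp
  refine (gc.l_le (cllClosure_subset hQ.isLocalClone_totalOps ?_)).antisymm
    (partialCloneClosure_subset (isLocalClone_cllClosure _).1.isPartialClone_partRestrictions ?_)
  · exact Set.sUnion_subset fun C hC =>
      gc.le_u ((Set.subset_biUnion_of_mem hC).trans (subset_partialCloneClosure _))
  · exact Set.iUnion₂_subset fun C hC =>
      gc.monotone_l ((Set.subset_sUnion_of_mem hC).trans (subset_cllClosure _))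

/-- The map sending each local clone on the countably infinite set `X` to the
partial clone of all restrictions of its operations to finite domains is injective and
preserves arbitrary (including infinite) joins. -/
theorem partRestrictions_injective_and_preserves_joins (X : Type) [Countable X] [Infinite X] :
    (∀ C : Set (FinOp X), IsLocalClone C → IsPartialClone (partRestrictions C)) ∧
    Set.InjOn (partRestrictions (X := X)) {C : Set (FinOp X) | IsLocalClone C} ∧
    (∀ 𝒮 : Set (Set (FinOp X)), (∀ C ∈ 𝒮, IsLocalClone C) →
      partRestrictions (cllClosure (⋃₀ 𝒮)) =
        partialCloneClosure (⋃ C ∈ 𝒮, partRestrictions C)) :=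
  partRestrictions_injective_and_preserves_joins_general X
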